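/- arXiv:2411.08679 — 4 statements merged into one kernel-verified Lean document; each statement's English description precedes it below -/
import Mathlib

section
/- Let q ≥ 1 and equip ℝ^{2q} with the quadratic form Q_{q,q}. Every totally isotropic linear subspace E ⊆ ℝ^{2q} of dimension q−1 is contained in exactly two totally isotropic subspaces of dimension q; that is, the set {F : F a linear subspace of ℝ^{2q}, dim F = q, Q_{q,q} vanishes on F, E ⊆ F} has exactly two elements. -/
/-!
Let `W = E^⊥`; it has dimension `q + 1`, contains every totally isotropic `F ⊇ E`, and `E` is
orthogonal to all of `W`. The subspaces `{v | v ∘ rev = ± v}` have dimension `q` and `Q = ± ‖·‖²`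
on them, so both meet `W` and give `x, y ∈ W` with `Q x > 0 > Q y`. The Gram determinant of `x, y`
is negative, so they are independent modulo `E`, and `W = E ⊕ ℝx ⊕ ℝy`. An isotropic `F` of
dimension `q` is then `E ⊕ ℝ(x + t y)` with `Q(x + t y) = 0` (its direction can't be `y`), and this
quadratic in `t` has exactly two roots, its leading and constant coefficients having opposite signs.
-/

open Matrix

/-- The symmetric matrix of the standard quadratic form of signature `(p,q)` on `ℝ^(p+q)`,
with block form `[[0,0,J],[0,I,0],[J,0,0]]` where `J` is the `q×q` anti-diagonal matrix. -/
def Mpq (p q : ℕ) : Matrix (Fin (p+q)) (Fin (p+q)) ℝ :=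
  Matrix.of fun i j =>
    if ((i:ℕ) + (j:ℕ) + 1 = p + q ∧ ((i:ℕ) < q ∨ (j:ℕ) < q)) then 1
    else if (i = j ∧ q ≤ (i:ℕ) ∧ (i:ℕ) < p) then 1 else 0

/-- The quadratic form `Q_{p,q}`. -/
noncomputable def Qf (p q : ℕ) (v : Fin (p+q) → ℝ) : ℝ := v ⬝ᵥ (Mpq p q).mulVec v

/-- The bilinear form `B_{p,q}`. -/
noncomputable def Bf (p q : ℕ) (v w : Fin (p+q) → ℝ) : ℝ := v ⬝ᵥ (Mpq p q).mulVec w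

open Module Submodule

lemma ncard_setOf_quadratic_eq_zero {a b c : ℝ} (ha : a ≠ 0) (hd : 0 < discrim a b c) :
    {x : ℝ | a * (x * x) + b * x + c = 0}.ncard = 2 := by
  set s := √(discrim a b c)
  have hs : discrim a b c = s * s := (Real.mul_self_sqrt hd.le).symm
  have hs0 : s ≠ 0 := (Real.sqrt_pos.2 hd).ne'
  have hroots : {x : ℝ | a * (x * x) + b * x + c = 0} =
      {(-b + s) / (2 * a), (-b - s) / (2 * a)} := by
    ext x
    simp only [Set.mem_ofPred_eq, Set.mem_insert_iff, Set.mem_singleton_iff]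
    exact quadratic_eq_zero_iff ha hs x
  rw [hroots]
  refine Set.ncard_pair fun h => hs0 ?_
  rw [div_left_inj' (mul_ne_zero two_ne_zero ha)] at h
  linarith

namespace LinearMap.BilinForm

variable {V : Type*} [AddCommGroup V]

section Polarization

variable {K : Type*} [Field K] [NeZero (2 : K)] [Module K V] {B : LinearMap.BilinForm K V}

lemma apply_eq_zero_of_forall_apply_self_eq_zero (hB : B.IsSymm) {S : Submodule K V}
    (hS : ∀ v ∈ S, B v v = 0) {v w : V} (hv : v ∈ S) (hw : w ∈ S) : B v w = 0 := by
  have h := hS _ (S.add_mem hv hw)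
  simp only [map_add, LinearMap.add_apply, hS v hv, hS w hw, hB.eq w v] at h
  simpa [← two_mul, two_ne_zero] using h

lemma le_orthogonal_of_isotropic (hB : B.IsSymm) {E F : Submodule K V}
    (hF : ∀ v ∈ F, B v v = 0) (hEF : E ≤ F) : F ≤ B.orthogonal E := fun _ hf =>
  mem_orthogonal_iff.2 fun _ he => apply_eq_zero_of_forall_apply_self_eq_zero hB hF (hEF he) hf

end Polarization

variable [Module ℝ V] {B : LinearMap.BilinForm ℝ V} {E W : Submodule ℝ V}

lemma apply_add_self_of_mem (hB : B.IsSymm) (hEW : E ≤ W) (hrad : ∀ e ∈ E, ∀ w ∈ W, B e w = 0)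
    {e w : V} (he : e ∈ E) (hw : w ∈ W) : B (e + w) (e + w) = B w w := by
  simp only [map_add, LinearMap.add_apply, hrad e he w hw, hB.eq w e, hrad e he e (hEW he)]
  ring

lemma eq_zero_of_smul_add_smul_mem (hB : B.IsSymm) (hrad : ∀ e ∈ E, ∀ w ∈ W, B e w = 0)
    {x y : V} (hx : x ∈ W) (hy : y ∈ W) (hxy : B x x * B y y < 0) {a b : ℝ}
    (h : a • x + b • y ∈ E) : a = 0 ∧ b = 0 := by
  have h₁ := hrad _ h x hx
  have h₂ := hrad _ h y hy
  simp only [map_add, map_smul, LinearMap.add_apply, LinearMap.smul_apply, smul_eq_mul,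
    hB.eq y x] at h₁ h₂
  have hgram : B x x * B y y - B x y ^ 2 ≠ 0 := by nlinarith [sq_nonneg (B x y)]
  constructor
  · refine (mul_eq_zero.1 ?_).resolve_right hgram
    linear_combination B y y * h₁ - B x y * h₂
  · refine (mul_eq_zero.1 ?_).resolve_right hgram
    linear_combination B x x * h₂ - B x y * h₁

variable {x y : V}

lemma finrank_sup_span_add_smul [FiniteDimensional ℝ V]
    (hind : ∀ a b : ℝ, a • x + b • y ∈ E → a = 0 ∧ b = 0) (t : ℝ) :
    finrank ℝ ↥(E ⊔ ℝ ∙ (x + t • y)) = finrank ℝ E + 1 :=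
  finrank_sup_span_singleton fun h => one_ne_zero (hind 1 t (by rwa [one_smul])).1

lemma injective_sup_span_add_smul (hind : ∀ a b : ℝ, a • x + b • y ∈ E → a = 0 ∧ b = 0) :
    Function.Injective fun t : ℝ => E ⊔ ℝ ∙ (x + t • y) := by
  intro s t (hst : E ⊔ ℝ ∙ (x + s • y) = E ⊔ ℝ ∙ (x + t • y))
  have hmem : x + s • y ∈ E ⊔ ℝ ∙ (x + t • y) := by
    rw [← hst]
    exact mem_sup_right (mem_span_singleton_self _)
  obtain ⟨e, he, _, hc, hsum⟩ := mem_sup.1 hmem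
  obtain ⟨c, rfl⟩ := mem_span_singleton.1 hc
  obtain ⟨hc1, hs⟩ := hind (1 - c) (s - c * t) (by
    convert he using 1
    rw [eq_sub_of_add_eq hsum]
    module)
  have hc : c = 1 := by linarith
  subst hc
  linarith

lemma sup_span_sup_span_eq [FiniteDimensional ℝ V] (hEW : E ≤ W) (hx : x ∈ W) (hy : y ∈ W)
    (hW : finrank ℝ W = finrank ℝ E + 2)
    (hind : ∀ a b : ℝ, a • x + b • y ∈ E → a = 0 ∧ b = 0) : E ⊔ ℝ ∙ x ⊔ ℝ ∙ y = W := by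
  have hxE : x ∉ E := fun h => one_ne_zero (hind 1 0 (by simpa using h)).1
  have hyEx : y ∉ E ⊔ ℝ ∙ x := fun h => by
    obtain ⟨e, he, _, hc, rfl⟩ := mem_sup.1 h
    obtain ⟨c, rfl⟩ := mem_span_singleton.1 hc
    exact one_ne_zero (hind (-c) 1 (by simpa using he)).2
  refine eq_of_le_of_finrank_eq ?_ ?_
  · exact sup_le (sup_le hEW ((span_singleton_le_iff_mem _ _).2 hx))
      ((span_singleton_le_iff_mem _ _).2 hy)
  · rw [finrank_sup_span_singleton hyEx, finrank_sup_span_singleton hxE, hW]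

lemma apply_self_eq_zero_of_mem_sup_span (hB : B.IsSymm) (hEW : E ≤ W)
    (hrad : ∀ e ∈ E, ∀ w ∈ W, B e w = 0) {z : V} (hz : z ∈ W) (hzz : B z z = 0) {v : V}
    (hv : v ∈ E ⊔ ℝ ∙ z) : B v v = 0 := by
  obtain ⟨e, he, _, hc, rfl⟩ := mem_sup.1 hv
  obtain ⟨c, rfl⟩ := mem_span_singleton.1 hc
  rw [apply_add_self_of_mem hB hEW hrad he (W.smul_mem c hz)]
  simp [hzz]

lemma exists_eq_sup_span_add_smul [FiniteDimensional ℝ V] (hEW : E ≤ W)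
    (hW : finrank ℝ W = finrank ℝ E + 2) (hx : x ∈ W) (hy : y ∈ W) (hyy : B y y ≠ 0)
    (hind : ∀ a b : ℝ, a • x + b • y ∈ E → a = 0 ∧ b = 0) {F : Submodule ℝ V}
    (hF : finrank ℝ F = finrank ℝ E + 1) (hFiso : ∀ v ∈ F, B v v = 0) (hEF : E ≤ F)
    (hFW : F ≤ W) : ∃ t : ℝ, B (x + t • y) (x + t • y) = 0 ∧ E ⊔ ℝ ∙ (x + t • y) = F := by
  obtain ⟨f, hfF, hfE⟩ := SetLike.exists_of_lt (hEF.lt_of_ne (by rintro rfl; omega))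
  rw [← sup_span_sup_span_eq hEW hx hy hW hind, sup_assoc] at hFW
  obtain ⟨e, he, _, hxy, rfl⟩ := mem_sup.1 (hFW hfF)
  obtain ⟨_, hax, _, hby, rfl⟩ := mem_sup.1 hxy
  obtain ⟨a, rfl⟩ := mem_span_singleton.1 hax
  obtain ⟨b, rfl⟩ := mem_span_singleton.1 hby
  have habF : a • x + b • y ∈ F := by simpa using F.sub_mem hfF (hEF he)
  have ha : a ≠ 0 := by
    rintro rfl
    have hb : b = 0 := by simpa [hyy] using hFiso _ habF
    simp [hb, he] at hfE
  have hxt : x + (b / a) • y = a⁻¹ • (a • x + b • y) := by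
    rw [smul_add, smul_smul, smul_smul, inv_mul_cancel₀ ha, one_smul, div_eq_inv_mul]
  have hzF : x + (b / a) • y ∈ F := hxt ▸ F.smul_mem _ habF
  refine ⟨b / a, hFiso _ hzF, eq_of_le_of_finrank_eq ?_ ?_⟩
  · exact sup_le hEF ((span_singleton_le_iff_mem _ _).2 hzF)
  · rw [finrank_sup_span_add_smul hind, hF]

theorem ncard_isotropic_extensions [FiniteDimensional ℝ V] (hB : B.IsSymm) (hEW : E ≤ W)
    (hrad : ∀ e ∈ E, ∀ w ∈ W, B e w = 0) (hW : finrank ℝ W = finrank ℝ E + 2)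
    (hx : x ∈ W) (hy : y ∈ W) (hxx : 0 < B x x) (hyy : B y y < 0) :
    {F : Submodule ℝ V |
      finrank ℝ F = finrank ℝ E + 1 ∧ (∀ v ∈ F, B v v = 0) ∧ E ≤ F ∧ F ≤ W}.ncard = 2 := by
  have hind : ∀ a b : ℝ, a • x + b • y ∈ E → a = 0 ∧ b = 0 := fun a b =>
    eq_zero_of_smul_add_smul_mem hB hrad hx hy (mul_neg_of_pos_of_neg hxx hyy)
  have hlines : {F : Submodule ℝ V |
      finrank ℝ F = finrank ℝ E + 1 ∧ (∀ v ∈ F, B v v = 0) ∧ E ≤ F ∧ F ≤ W} =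
      (fun t : ℝ => E ⊔ ℝ ∙ (x + t • y)) '' {t | B (x + t • y) (x + t • y) = 0} := by
    ext F
    constructor
    · rintro ⟨hF, hFiso, hEF, hFW⟩
      exact exists_eq_sup_span_add_smul hEW hW hx hy hyy.ne hind hF hFiso hEF hFW
    · rintro ⟨t, ht, rfl⟩
      have hz : x + t • y ∈ W := W.add_mem hx (W.smul_mem t hy)
      exact ⟨finrank_sup_span_add_smul hind t,
        fun v hv => apply_self_eq_zero_of_mem_sup_span hB hEW hrad hz ht hv, le_sup_left,
        sup_le hEW ((span_singleton_le_iff_mem _ _).2 hz)⟩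
  have hquad (t : ℝ) :
      B (x + t • y) (x + t • y) = B y y * (t * t) + 2 * B x y * t + B x x := by
    simp only [map_add, map_smul, LinearMap.add_apply, LinearMap.smul_apply, smul_eq_mul,
      hB.eq y x]
    ring
  rw [hlines, Set.ncard_image_of_injective _ (injective_sup_span_add_smul hind)]
  simp only [hquad]
  refine ncard_setOf_quadratic_eq_zero hyy.ne ?_
  rw [discrim]
  nlinarith [sq_nonneg (2 * B x y)]

end LinearMap.BilinForm

lemma Mpq_self_apply (q : ℕ) (i j : Fin (q + q)) : Mpq q q i j = if j = i.rev then 1 else 0 := by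
  have hrev : (i.rev : ℕ) = q + q - (i + 1) := Fin.val_rev i
  have hj := j.isLt
  simp only [Mpq, Matrix.of_apply, Fin.ext_iff, hrev]
  split_ifs <;> first | rfl | (exfalso; omega)

lemma Mpq_self_mulVec (q : ℕ) (w : Fin (q + q) → ℝ) : Mpq q q *ᵥ w = w ∘ Fin.rev := by
  ext i
  simp [mulVec, dotProduct, Mpq_self_apply]

noncomputable def Bpq (p q : ℕ) : LinearMap.BilinForm ℝ (Fin (p + q) → ℝ) :=
  Matrix.toLinearMap₂' ℝ (Mpq p q)

lemma Qf_eq_Bpq (p q : ℕ) (v : Fin (p + q) → ℝ) : Qf p q v = Bpq p q v v :=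
  (Matrix.toLinearMap₂'_apply' _ v v).symm

lemma Bpq_self_apply (q : ℕ) (v w : Fin (q + q) → ℝ) : Bpq q q v w = v ⬝ᵥ (w ∘ Fin.rev) := by
  rw [Bpq, Matrix.toLinearMap₂'_apply', Mpq_self_mulVec]

lemma isSymm_Bpq_self (q : ℕ) : (Bpq q q).IsSymm := by
  refine ⟨fun v w => ?_⟩
  rw [Bpq_self_apply, Bpq_self_apply, dotProduct_comm w]
  exact dotProduct_comp_equiv_symm v w Fin.revPerm

lemma nondegenerate_Bpq_self (q : ℕ) : (Bpq q q).Nondegenerate := by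
  refine (isSymm_Bpq_self q).isRefl.nondegenerate_iff_separatingLeft.2 fun v hv => ?_
  simpa [Bpq_self_apply, Function.comp_def] using hv (v ∘ Fin.rev)

-- For `ε = ±1` the kernel is `{v | v ∘ rev = ε v}`, cut out by only `q` equations.
noncomputable def revDefect (q : ℕ) (ε : ℝ) : (Fin (q + q) → ℝ) →ₗ[ℝ] Fin q → ℝ :=
  LinearMap.funLeft ℝ ℝ (Fin.castAdd q) ∘ₗ (LinearMap.id - ε • LinearMap.funLeft ℝ ℝ Fin.rev)

lemma le_finrank_ker_revDefect (q : ℕ) (ε : ℝ) :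
    q ≤ finrank ℝ (LinearMap.ker (revDefect q ε)) := by
  have h := LinearMap.finrank_range_add_finrank_ker (revDefect q ε)
  have hr := (LinearMap.range (revDefect q ε)).finrank_le
  simp only [finrank_fin_fun] at h hr
  omega

lemma comp_rev_of_mem_ker_revDefect {q : ℕ} {ε : ℝ} (hε : ε * ε = 1) {v : Fin (q + q) → ℝ}
    (hv : v ∈ LinearMap.ker (revDefect q ε)) : v ∘ Fin.rev = ε • v := by
  have key (j : Fin (q + q)) (hj : (j : ℕ) < q) : v j = ε * v j.rev :=
    sub_eq_zero.1 (congrFun (LinearMap.mem_ker.1 hv) ⟨j, hj⟩ :)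
  ext j
  simp only [Function.comp_apply, Pi.smul_apply, smul_eq_mul]
  rcases lt_or_ge (j : ℕ) q with hj | hj
  · linear_combination -ε * key j hj - v j.rev * hε
  · simpa using key j.rev (by rw [Fin.val_rev]; omega)

lemma Qf_of_mem_ker_revDefect {q : ℕ} {ε : ℝ} (hε : ε * ε = 1) {v : Fin (q + q) → ℝ}
    (hv : v ∈ LinearMap.ker (revDefect q ε)) : Qf q q v = ε * (v ⬝ᵥ v) := by
  rw [Qf_eq_Bpq, Bpq_self_apply, comp_rev_of_mem_ker_revDefect hε hv, dotProduct_smul,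
    smul_eq_mul]

lemma exists_mem_mul_Qf_pos {q : ℕ} {W : Submodule ℝ (Fin (q + q) → ℝ)}
    (hW : q < finrank ℝ W) {ε : ℝ} (hε : ε * ε = 1) : ∃ w ∈ W, 0 < ε * Qf q q w := by
  have hmeet : ¬Disjoint W (LinearMap.ker (revDefect q ε)) := fun h => by
    have := finrank_add_finrank_le_of_disjoint h
    have := le_finrank_ker_revDefect q ε
    simp only [finrank_fin_fun] at *
    omega
  obtain ⟨w, hwW, hwK, hw⟩ : ∃ w ∈ W, w ∈ LinearMap.ker (revDefect q ε) ∧ w ≠ 0 := by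
    simpa [disjoint_def] using hmeet
  refine ⟨w, hwW, ?_⟩
  rw [Qf_of_mem_ker_revDefect hε hwK, ← mul_assoc, hε, one_mul]
  simpa using dotProduct_self_star_pos_iff.2 hw

open LinearMap.BilinForm in
/-- Every totally isotropic subspace of `ℝ^{q,q}` of dimension `q-1` is contained in
exactly two totally isotropic subspaces of dimension `q`. -/
theorem stmt0 (q : ℕ) (hq : 1 ≤ q)
    (E : Submodule ℝ (Fin (q+q) → ℝ))
    (hdim : Module.finrank ℝ ↥E = q - 1)
    (hiso : ∀ v ∈ E, Qf q q v = 0) :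
    {F : Submodule ℝ (Fin (q+q) → ℝ) |
      Module.finrank ℝ ↥F = q ∧ (∀ v ∈ F, Qf q q v = 0) ∧ E ≤ F}.ncard = 2 := by
  set B := Bpq q q
  set W := B.orthogonal E
  have hB : B.IsSymm := isSymm_Bpq_self q
  have hEW : E ≤ W :=
    le_orthogonal_of_isotropic hB (fun v hv => Qf_eq_Bpq q q v ▸ hiso v hv) le_rfl
  have hW : finrank ℝ W = q + 1 := by
    rw [finrank_orthogonal (nondegenerate_Bpq_self q), finrank_fin_fun, hdim]
    omega
  obtain ⟨x, hx, hxx⟩ := exists_mem_mul_Qf_pos (W := W) (by omega) (ε := 1) (by norm_num)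
  obtain ⟨y, hy, hyy⟩ := exists_mem_mul_Qf_pos (W := W) (by omega) (ε := -1) (by norm_num)
  have hset : {F : Submodule ℝ (Fin (q+q) → ℝ) |
      finrank ℝ F = q ∧ (∀ v ∈ F, Qf q q v = 0) ∧ E ≤ F} =
      {F : Submodule ℝ (Fin (q+q) → ℝ) |
        finrank ℝ F = finrank ℝ E + 1 ∧ (∀ v ∈ F, B v v = 0) ∧ E ≤ F ∧ F ≤ W} := by
    simp only [Qf_eq_Bpq, hdim, Nat.sub_add_cancel hq]
    ext F
    exact ⟨fun ⟨hF, hFiso, hEF⟩ => ⟨hF, hFiso, hEF, le_orthogonal_of_isotropic hB hFiso hEF⟩,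
      fun ⟨hF, hFiso, hEF, _⟩ => ⟨hF, hFiso, hEF⟩⟩
  rw [hset]
  refine ncard_isotropic_extensions hB hEW (fun e he w hw => mem_orthogonal_iff.1 hw e he)
    (by omega) hx hy ?_ ?_
  · simpa [Qf_eq_Bpq] using hxx
  · simpa [Qf_eq_Bpq] using hyy
end

section
/- Let n ≥ 1, let 1 ≤ i ≤ n, and let g be an invertible n×n real matrix. Let E = span(e_{n−i+1},…,e_n) and H = span(e_{i+1},…,e_n), where (e_1,…,e_n) is the standard basis of ℝⁿ. Then the subspaces g·E (the image of E under g) and H are complementary, i.e. g·E ⊕ H = ℝⁿ, if and only if det_i(g) ≠ 0, where det_i(g) is the determinant of the submatrix of g with rows 1,…,i and columns n−i+1,…,n. -/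
/-!
Write `E` as the range of the extension by zero `ε : ℝⁱ → ℝⁿ` along the last `i` coordinates and
`H` as the kernel of the restriction `π : ℝⁿ → ℝⁱ` to the first `i` coordinates. Then `π ∘ g ∘ ε`
is multiplication by the top-right `i×i` block of `g`. For a surjective `π` and a map `f` with
`π ∘ f` an endomorphism of a finite-dimensional space, `range f` and `ker π` are complementary
exactly when `π ∘ f` is surjective, i.e. (for a square matrix) when its determinant is nonzero.
-/

open Matrix

/-- The top-right `i×i` minor of an `n×n` matrix: the determinant of the submatrix with
rows `1,…,i` and columns `n-i+1,…,n` (in 1-indexed terms). -/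
noncomputable def detTR {n : ℕ} (U : Matrix (Fin n) (Fin n) ℝ) (i : ℕ) : ℝ :=
  Matrix.det (Matrix.of fun a b : Fin i =>
    if h : (a : ℕ) < n ∧ n - i + (b : ℕ) < n then U ⟨a, h.1⟩ ⟨n - i + b, h.2⟩ else 0)

/-- The coordinate subspace of `ℝⁿ` spanned by the standard basis vectors `e_a`, `a ∈ S`. -/
def coordSub (n : ℕ) (S : Set (Fin n)) : Submodule ℝ (Fin n → ℝ) where
  carrier := {v | ∀ a, a ∉ S → v a = 0}
  add_mem' := by
    intro u v hu hv a ha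
    simp [hu a ha, hv a ha]
  zero_mem' := by
    intro a _
    rfl
  smul_mem' := by
    intro c v hv a ha
    simp [hv a ha]

theorem mem_coordSub {n : ℕ} {S : Set (Fin n)} {v : Fin n → ℝ} :
    v ∈ coordSub n S ↔ ∀ a ∉ S, v a = 0 :=
  Iff.rfl

open Function Submodule

namespace LinearMap

section Ring

variable {R U V W : Type*} [Ring R] [AddCommGroup U] [Module R U] [AddCommGroup V] [Module R V]
  [AddCommGroup W] [Module R W] {f : U →ₗ[R] V} {π : V →ₗ[R] W}

theorem disjoint_range_ker_of_injective_comp (h : Injective (π ∘ₗ f)) :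
    Disjoint (range f) (ker π) := by
  rw [disjoint_def]
  rintro _ ⟨x, rfl⟩ hx
  have : x = 0 := h (by simpa using hx)
  simp [this]

theorem codisjoint_range_ker_iff_surjective_comp (hπ : Surjective π) :
    Codisjoint (range f) (ker π) ↔ Surjective (π ∘ₗ f) := by
  rw [codisjoint_iff, ← map_eq_top_iff (range_eq_top.2 hπ), ← range_comp, range_eq_top]

end Ring

theorem isCompl_range_ker_iff_surjective_comp {K U V : Type*} [Field K] [AddCommGroup U]
    [Module K U] [FiniteDimensional K U] [AddCommGroup V] [Module K V] {f : U →ₗ[K] V}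
    {π : V →ₗ[K] U} (hπ : Surjective π) :
    IsCompl (range f) (ker π) ↔ Surjective (π ∘ₗ f) :=
  ⟨fun h => (codisjoint_range_ker_iff_surjective_comp hπ).1 h.codisjoint, fun h =>
    ⟨disjoint_range_ker_of_injective_comp (injective_iff_surjective.2 h),
      (codisjoint_range_ker_iff_surjective_comp hπ).2 h⟩⟩

end LinearMap

theorem Matrix.funLeft_comp_mulVecLin_comp_extendByZero {R l m n k : Type*} [CommSemiring R]
    [Fintype n] [Fintype k] (g : Matrix m n R) (r : l → m) {e : k → n} (he : Injective e) :
    LinearMap.funLeft R R r ∘ₗ g.mulVecLin ∘ₗ ExtendByZero.linearMap R e =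
      (g.submatrix r e).mulVecLin := by
  ext x a
  simp only [LinearMap.comp_apply, LinearMap.funLeft_apply, mulVecLin_apply, mulVec, dotProduct,
    ExtendByZero.linearMap_apply, submatrix_apply]
  refine (Fintype.sum_of_injective e he _ _ (fun j hj => ?_) fun b => ?_).symm
  · rw [extend_apply' _ _ _ hj, Pi.zero_apply, mul_zero]
  · rw [he.extend_apply]

theorem coordSub_range_eq_range_extendByZero {n k : ℕ} {e : Fin k → Fin n} (he : Injective e) :
    coordSub n (Set.range e) = LinearMap.range (ExtendByZero.linearMap ℝ e) := by
  ext v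
  constructor
  · intro hv
    refine ⟨v ∘ e, funext fun a => ?_⟩
    by_cases ha : a ∈ Set.range e
    · obtain ⟨b, rfl⟩ := ha
      simp [he.extend_apply]
    · simp [extend_apply' _ _ _ ha, hv a ha]
  · rintro ⟨x, rfl⟩ a ha
    simp [extend_apply' _ _ _ ha]

theorem coordSub_compl_range_eq_ker_funLeft {n k : ℕ} (r : Fin k → Fin n) :
    coordSub n (Set.range r)ᶜ = LinearMap.ker (LinearMap.funLeft ℝ ℝ r) := by
  ext v
  simp [mem_coordSub, funext_iff]

def Fin.lastBlock {n i : ℕ} (h : i ≤ n) (b : Fin i) : Fin n :=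
  ⟨n - i + b, by omega⟩

theorem Fin.lastBlock_injective {n i : ℕ} (h : i ≤ n) : Injective (Fin.lastBlock h) :=
  fun b c hbc => Fin.ext (by simpa [Fin.lastBlock] using hbc)

theorem Fin.range_lastBlock {n i : ℕ} (h : i ≤ n) :
    Set.range (Fin.lastBlock h) = {a : Fin n | n - i ≤ (a : ℕ)} := by
  ext a
  constructor
  · rintro ⟨b, rfl⟩
    exact Nat.le_add_right _ _
  · intro (ha : n - i ≤ (a : ℕ))
    exact ⟨⟨a - (n - i), by omega⟩, Fin.ext (by simp only [Fin.lastBlock]; omega)⟩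

theorem detTR_eq_det_submatrix {n i : ℕ} (h : i ≤ n) (U : Matrix (Fin n) (Fin n) ℝ) :
    detTR U i = (U.submatrix (Fin.castLE h) (Fin.lastBlock h)).det := by
  unfold detTR
  congr 1
  ext a b
  rw [Matrix.of_apply, dif_pos ⟨by omega, by omega⟩]
  rfl

theorem stmt3_general (n i : ℕ) (hi2 : i ≤ n)
    (g : Matrix (Fin n) (Fin n) ℝ) :
    IsCompl (Submodule.map g.mulVecLin (coordSub n {a | n - i ≤ (a:ℕ)}))
        (coordSub n {a | i ≤ (a:ℕ)}) ↔ detTR g i ≠ 0 := by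
  have hE : coordSub n {a | n - i ≤ (a:ℕ)} =
      LinearMap.range (ExtendByZero.linearMap ℝ (Fin.lastBlock hi2)) := by
    rw [← Fin.range_lastBlock hi2,
      coordSub_range_eq_range_extendByZero (Fin.lastBlock_injective hi2)]
  have hH : coordSub n {a | i ≤ (a:ℕ)} =
      LinearMap.ker (LinearMap.funLeft ℝ ℝ (Fin.castLE hi2)) := by
    rw [← coordSub_compl_range_eq_ker_funLeft, Fin.range_castLE]
    congr 1
    ext a
    simp
  rw [hE, hH, ← LinearMap.range_comp, LinearMap.isCompl_range_ker_iff_surjective_comp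
      (LinearMap.funLeft_surjective_of_injective _ _ _ (Fin.castLE_injective hi2)),
    Matrix.funLeft_comp_mulVecLin_comp_extendByZero _ _ (Fin.lastBlock_injective hi2),
    detTR_eq_det_submatrix hi2, Matrix.coe_mulVecLin, Matrix.mulVec_surjective_iff_isUnit,
    Matrix.isUnit_iff_isUnit_det, isUnit_iff_ne_zero]

/-- For an invertible matrix `g`, with `E = span(e_{n-i+1},…,e_n)` and
`H = span(e_{i+1},…,e_n)`, the subspaces `g·E` and `H` are complementary iff the top-right
`i×i` minor of `g` is nonzero. -/
theorem stmt3 (n i : ℕ) (hn : 1 ≤ n) (hi1 : 1 ≤ i) (hi2 : i ≤ n)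
    (g : Matrix (Fin n) (Fin n) ℝ) (hg : IsUnit g) :
    IsCompl (Submodule.map g.mulVecLin (coordSub n {a | n - i ≤ (a:ℕ)}))
        (coordSub n {a | i ≤ (a:ℕ)}) ↔ detTR g i ≠ 0 :=
  stmt3_general n i hi2 g
end

section
/- Let p ≥ q ≥ 1, n = p+q, and let U be an n×n real matrix with Uᵀ M_{p,q} U = M_{p,q} (so U is invertible). Then for all 1 ≤ a, b ≤ q one has (U⁻¹)_{a, n+1−b} = U_{b, n+1−a}; consequently, for every 1 ≤ i ≤ q the top-right i×i submatrix of U⁻¹ is the anti-transpose (reflection across the anti-diagonal) of the top-right i×i submatrix of U, and in particular det_i(U⁻¹) = det_i(U). -/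
/-
Let `σ` be the involution of `Fin (p+q)` that sends `i ↦ p+q-1-i` on the first and last `q`
indices and fixes the middle ones. Then `M_{p,q}` is the permutation matrix of `σ`, so
`Uᵀ M U = M` gives `U⁻¹ = M Uᵀ M`, i.e. `(U⁻¹)_{a,c} = U_{σ c, σ a}`. On the first `q` rows and
the last `q` columns `σ` is the reversal, hence the top-right corner of `U⁻¹` is the
anti-transpose of that of `U`; an anti-transpose is a transpose followed by one permutation of
both rows and columns, so it preserves determinants.
-/

open Matrix

section PermMatrixIsometry

variable {n R : Type*} [Fintype n] [DecidableEq n] [CommRing R] {σ : Equiv.Perm n}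
  {U : Matrix n n R}

theorem permMatrix_inv_mul_transpose_mul_permMatrix_mul_eq_one
    (hU : Uᵀ * σ.permMatrix R * U = σ.permMatrix R) :
    σ⁻¹.permMatrix R * Uᵀ * σ.permMatrix R * U = 1 := by
  rw [Matrix.mul_assoc, Matrix.mul_assoc, ← Matrix.mul_assoc Uᵀ, hU, ← permMatrix_mul,
    mul_inv_cancel, permMatrix_one]

theorem isUnit_of_transpose_mul_permMatrix_mul_eq
    (hU : Uᵀ * σ.permMatrix R * U = σ.permMatrix R) : IsUnit U :=
  (isUnit_iff_isUnit_det U).2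
    (isUnit_det_of_left_inverse (permMatrix_inv_mul_transpose_mul_permMatrix_mul_eq_one hU))

theorem inv_apply_of_transpose_mul_permMatrix_mul_eq
    (hU : Uᵀ * σ.permMatrix R * U = σ.permMatrix R) (i j : n) :
    U⁻¹ i j = U (σ.symm j) (σ.symm i) := by
  rw [inv_eq_left_inv (permMatrix_inv_mul_transpose_mul_permMatrix_mul_eq_one hU),
    PEquiv.mul_toMatrix_toPEquiv, PEquiv.toMatrix_toPEquiv_mul]
  rfl

end PermMatrixIsometry

def pqReflect (p q : ℕ) (i : Fin (p + q)) : Fin (p + q) :=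
  if (i : ℕ) < q ∨ p ≤ (i : ℕ) then i.rev else i

theorem pqReflect_involutive (p q : ℕ) : Function.Involutive (pqReflect p q) := by
  intro i
  apply Fin.ext
  unfold pqReflect
  split_ifs <;> simp only [Fin.val_rev] at * <;> omega

theorem pqReflect_of_lt {p q : ℕ} {i : Fin (p + q)} (hi : (i : ℕ) < q) :
    pqReflect p q i = i.rev :=
  if_pos (Or.inl hi)

theorem pqReflect_rev_of_lt {p q : ℕ} {i : Fin (p + q)} (hi : (i : ℕ) < q) :
    pqReflect p q i.rev = i := by
  rw [← pqReflect_of_lt hi, pqReflect_involutive]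

theorem Mpq_eq_permMatrix (p q : ℕ) :
    Mpq p q = ((pqReflect_involutive p q).toPerm _).permMatrix ℝ := by
  ext i j
  simp only [Mpq, of_apply, PEquiv.toMatrix_apply, Equiv.toPEquiv_apply,
    Function.Involutive.coe_toPerm, Option.mem_def, Option.some.injEq, pqReflect, Fin.ext_iff]
  split_ifs <;> grind

theorem inv_apply_rev_of_transpose_mul_Mpq_mul_eq {p q : ℕ}
    {U : Matrix (Fin (p + q)) (Fin (p + q)) ℝ} (hU : Uᵀ * Mpq p q * U = Mpq p q)
    {a b : Fin (p + q)} (ha : (a : ℕ) < q) (hb : (b : ℕ) < q) :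
    U⁻¹ a b.rev = U b a.rev := by
  rw [Mpq_eq_permMatrix] at hU
  rw [inv_apply_of_transpose_mul_permMatrix_mul_eq hU, Function.Involutive.toPerm_symm,
    Function.Involutive.coe_toPerm, pqReflect_rev_of_lt hb, pqReflect_of_lt ha]

def Matrix.antitranspose {m : ℕ} {α : Type*} (A : Matrix (Fin m) (Fin m) α) :
    Matrix (Fin m) (Fin m) α :=
  Aᵀ.submatrix Fin.rev Fin.rev

theorem Matrix.det_antitranspose {m : ℕ} {R : Type*} [CommRing R]
    (A : Matrix (Fin m) (Fin m) R) :
    A.antitranspose.det = A.det :=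
  (det_submatrix_equiv_self Fin.revPerm Aᵀ).trans (det_transpose A)

def topRightCorner {n : ℕ} {α : Type*} [Zero α] (U : Matrix (Fin n) (Fin n) α) (i : ℕ) :
    Matrix (Fin i) (Fin i) α :=
  of fun a b : Fin i =>
    if h : (a : ℕ) < n ∧ n - i + (b : ℕ) < n then U ⟨a, h.1⟩ ⟨n - i + b, h.2⟩ else 0

theorem detTR_eq_det_topRightCorner {n : ℕ} (U : Matrix (Fin n) (Fin n) ℝ) (i : ℕ) :
    detTR U i = (topRightCorner U i).det :=
  rfl

theorem topRightCorner_inv_eq_antitranspose {p q : ℕ}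
    {U : Matrix (Fin (p + q)) (Fin (p + q)) ℝ} (hU : Uᵀ * Mpq p q * U = Mpq p q)
    {i : ℕ} (hi : i ≤ q) :
    topRightCorner U⁻¹ i = (topRightCorner U i).antitranspose := by
  ext a b
  have ha := a.isLt
  have hb := b.isLt
  simp only [topRightCorner, antitranspose, of_apply, submatrix_apply, transpose_apply, Fin.val_rev]
  rw [dif_pos (by omega), dif_pos (by omega)]
  -- column `p+q-i+b` of `U⁻¹` is the reversal of column `i-1-b`, itself `Fin.rev b` in `Fin i`
  convert inv_apply_rev_of_transpose_mul_Mpq_mul_eq hU (a := ⟨a, by omega⟩)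
    (b := ⟨i - 1 - b, by omega⟩) (by simp only; omega) (by simp only; omega) using 2 <;>
    ext <;> simp only [Fin.val_rev] <;> omega

/-- If `Uᵀ M_{p,q} U = M_{p,q}` then `U` is invertible, the top-right `q×q` corner of `U⁻¹`
is the anti-transpose of that of `U` (entrywise: `(U⁻¹)_{a,n+1-b} = U_{b,n+1-a}` for
`1 ≤ a,b ≤ q`), and `det_i(U⁻¹) = det_i(U)` for all `1 ≤ i ≤ q`. -/
theorem stmt4 (p q : ℕ)
    (U : Matrix (Fin (p+q)) (Fin (p+q)) ℝ)
    (hU : Uᵀ * Mpq p q * U = Mpq p q) :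
    IsUnit U ∧
    (∀ a b : Fin (p+q), (a:ℕ) < q → (b:ℕ) < q →
      U⁻¹ a ⟨p + q - 1 - (b:ℕ), by omega⟩ = U b ⟨p + q - 1 - (a:ℕ), by omega⟩) ∧
    (∀ i : ℕ, 1 ≤ i → i ≤ q → detTR U⁻¹ i = detTR U i) := by
  refine ⟨?_, fun a b ha hb => ?_, fun i _ hi => ?_⟩
  · rw [Mpq_eq_permMatrix] at hU
    exact isUnit_of_transpose_mul_permMatrix_mul_eq hU
  · convert inv_apply_rev_of_transpose_mul_Mpq_mul_eq hU ha hb using 2 <;>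
      ext <;> simp only [Fin.val_rev] <;> omega
  · rw [detTR_eq_det_topRightCorner, detTR_eq_det_topRightCorner,
      topRightCorner_inv_eq_antitranspose hU hi, det_antitranspose]
end

section
/- Let V be a real vector space, B : V × V → ℝ a symmetric bilinear form, and write Q(v) = B(v,v). Let v₁, v₂ ∈ V and a, b ∈ ℝ, and assume Q(v₁) ≠ 0. Then the determinant of the 2×2 real matrix [[−b + (a/2)·Q(v₂) − B(v₁,v₂), −(Q(v₁) + 2ab)/2],[−Q(v₂)/2, b]] equals −(1/4)·Q(v₁)·Q(v₂ + (2b/Q(v₁))·v₁). (This is the transversality equation for (1,2)-flags: the top-right 2×2 minor of the unipotent matrix parametrizing a pointed photon factors as a product of values of the quadratic form.) -/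
open Matrix

theorem LinearMap.BilinForm.apply_add_smul_self {R M : Type*} [CommRing R] [AddCommGroup M]
    [Module R M] (B : LinearMap.BilinForm R M) (hsymm : ∀ x y : M, B x y = B y x)
    (x y : M) (t : R) :
    B (x + t • y) (x + t • y) = B x x + 2 * t * B x y + t ^ 2 * B y y := by
  simp only [map_add, map_smul, LinearMap.add_apply, LinearMap.smul_apply, smul_eq_mul,
    hsymm y x]
  ring

/-- The transversality equation for (1,2)-flags: assuming `Q(v₁) ≠ 0`, the top-right `2×2`
minor of the unipotent matrix parametrizing a pointed photon factors as
`-(1/4)·Q(v₁)·Q(v₂ + (2b/Q(v₁))·v₁)`.  Here `B` is a symmetric bilinear form and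
`Q(v) = B(v,v)`. -/
theorem stmt5 (V : Type*) [AddCommGroup V] [Module ℝ V]
    (B : LinearMap.BilinForm ℝ V) (hsymm : ∀ x y : V, B x y = B y x)
    (v₁ v₂ : V) (a b : ℝ) (h : B v₁ v₁ ≠ 0) :
    Matrix.det !![-b + (a/2) * (B v₂ v₂) - B v₁ v₂, -((B v₁ v₁) + 2*a*b)/2;
                  -(B v₂ v₂)/2, b]
      = -(1/4) * (B v₁ v₁) *
          (B (v₂ + (2*b/(B v₁ v₁)) • v₁) (v₂ + (2*b/(B v₁ v₁)) • v₁)) := by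
  -- both sides expand to `-b² - b·B(v₁,v₂) - Q(v₁)Q(v₂)/4`
  rw [Matrix.det_fin_two_of, B.apply_add_smul_self hsymm, hsymm v₂ v₁]
  field_simp
  ring
end
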